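/- If the empirical distribution at some position is not uniform and the alphabet has at least 2 symbols with k large enough, then there exists a single-symbol modification of one string (changing its symbol at that position from a most frequent to a least frequent symbol) that strictly increases both the pairwise Hamming distance sum and the position entropy contribution, provided the most frequent count exceeds the least frequent count by at least 2. -/

import Mathlib

/-!
Both quantities are sums, over positions and symbols, of a strictly concave function of the
symbol counts `c_e`. For the entropy this is `negMulLog (c_e / k)` itself; for the distance,
`2 D(P) = L k² - ∑_q ∑_e c_e²` because two strings agree at a position exactly when they carry
the same symbol there. Moving one string from `e⁺` to `e⁻` only changes the two counts
`c_{e⁺} ↦ c_{e⁺} - 1` and `c_{e⁻} ↦ c_{e⁻} + 1`, and when `c_{e⁻} + 2 ≤ c_{e⁺}` this transfer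
strictly increases `f c_{e⁻} + f c_{e⁺}` for every strictly concave `f`.
-/

open Finset

/-- Sum over positions of the Shannon entropy of the empirical symbol distribution. -/
noncomputable def entS {α : Type*} [Fintype α] [DecidableEq α] {k L : ℕ}
    (P : Fin k → Fin L → α) : ℝ :=
  ∑ p : Fin L, ∑ e : α,
    Real.negMulLog (((Finset.univ.filter fun m => P m p = e).card : ℝ) / k)

/-- Sum of pairwise Hamming distances of a family of strings. -/
def pairDistSum {α : Type*} [DecidableEq α] {k L : ℕ} (P : Fin k → Fin L → α) : ℕ :=
  ∑ i : Fin k, ∑ j ∈ Finset.univ.filter (fun j => i < j), hammingDist (P i) (P j)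

theorem StrictConcaveOn.add_lt_add_of_transfer {s : Set ℝ} {f : ℝ → ℝ}
    (hf : StrictConcaveOn ℝ s f) {x y x' y' : ℝ} (hx : x ∈ s) (hy : y ∈ s) (hxx' : x < x')
    (hx'y' : x' ≤ y') (hsum : x' + y' = x + y) : f x + f y < f x' + f y' := by
  have hyx : 0 < y - x := by linarith
  set t := (x' - x) / (y - x)
  have ht : t * (y - x) = x' - x := div_mul_cancel₀ _ hyx.ne'
  have ht0 : 0 < t := div_pos (by linarith) hyx
  have ht1 : 0 < 1 - t := by
    rw [sub_pos, div_lt_one hyx]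
    linarith
  have hxy : x ≠ y := by linarith
  have h₁ := hf.2 hx hy hxy ht1 ht0 (by ring)
  have h₂ := hf.2 hx hy hxy ht0 ht1 (by ring)
  simp only [smul_eq_mul] at h₁ h₂
  rw [show (1 - t) * x + t * y = x' by linear_combination ht] at h₁
  rw [show t * x + (1 - t) * y = y' by linear_combination -ht - hsum] at h₂
  linarith

theorem Finset.sum_sum_eq_two_nsmul_sum_sum_lt {ι M : Type*} [Fintype ι] [LinearOrder ι]
    [AddCommMonoid M] (f : ι → ι → M) (hsymm : ∀ i j, f i j = f j i) (hdiag : ∀ i, f i i = 0) :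
    ∑ i, ∑ j, f i j = 2 • ∑ i, ∑ j with i < j, f i j := by
  have hlow : ∑ i, ∑ j with ¬ i < j, f i j = ∑ i, ∑ j with i < j, f i j := by
    calc ∑ i, ∑ j with ¬ i < j, f i j = ∑ i, ∑ j with j < i, f i j := by
          refine sum_congr rfl fun i _ => ?_
          simp only [sum_filter]
          refine sum_congr rfl fun j _ => ?_
          rcases lt_trichotomy i j with hij | rfl | hij
          · simp [hij, hij.not_gt]
          · simp [hdiag]
          · simp [hij, hij.not_gt]
      _ = ∑ j, ∑ i with j < i, f i j := sum_comm' (by simp)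
      _ = _ := by simp only [hsymm]
  rw [two_nsmul]
  nth_rw 2 [← hlow]
  rw [← sum_add_distrib]
  exact sum_congr rfl fun i _ => (sum_filter_add_sum_filter_not _ _ _).symm

theorem Fintype.sum_add_pair_eq_of_eqOn_compl {α M : Type*} [Fintype α] [DecidableEq α]
    [AddCommMonoid M] {g g' : α → M} {a b : α} (hab : a ≠ b)
    (h : ∀ e, e ≠ a → e ≠ b → g' e = g e) :
    ∑ e, g' e + (g a + g b) = ∑ e, g e + (g' a + g' b) := by
  have hrest : ∑ e ∈ {a, b}ᶜ, g' e = ∑ e ∈ {a, b}ᶜ, g e :=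
    Finset.sum_congr rfl fun e he => by
      simp only [mem_compl, mem_insert, mem_singleton, not_or] at he
      exact h e he.1 he.2
  rw [← Finset.sum_add_sum_compl {a, b} g', ← Finset.sum_add_sum_compl {a, b} g, sum_pair hab,
    sum_pair hab, hrest]
  abel

theorem hammingDist_add_card_filter_eq {κ : Type*} {β : κ → Type*} [Fintype κ]
    [∀ q, DecidableEq (β q)] (x y : ∀ q, β q) :
    hammingDist x y + #{q | x q = y q} = Fintype.card κ := by
  rw [hammingDist, add_comm]
  exact card_filter_add_card_filter_not _

theorem card_filter_update_add {ι α : Type*} [Fintype ι] [DecidableEq ι] [DecidableEq α]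
    (v : ι → α) (m₀ : ι) (b e : α) :
    #{m | Function.update v m₀ b m = e} + (if v m₀ = e then 1 else 0)
      = #{m | v m = e} + (if b = e then 1 else 0) := by
  simp only [card_filter, Function.apply_update (fun _ x => if x = e then 1 else 0)]
  rw [← sum_erase_add _ _ (mem_univ m₀), ← sum_erase_add _ _ (mem_univ m₀),
    sum_congr rfl fun m hm => Function.update_of_ne (ne_of_mem_erase hm) _ _]
  simp only [Function.update_self]
  ring

section SymbolCount

variable {ι κ α : Type*} [Fintype ι] [DecidableEq α]

def symbolCount (P : ι → κ → α) (q : κ) (e : α) : ℕ :=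
  #{m | P m q = e}

theorem sum_symbolCount_sq [Fintype α] (P : ι → κ → α) (q : κ) :
    ∑ e, symbolCount P q e ^ 2 = ∑ i, #{j | P i q = P j q} := by
  calc ∑ e, symbolCount P q e ^ 2 = ∑ e, ∑ i with P i q = e, symbolCount P q e := by
        simp [symbolCount, sq]
    _ = ∑ i, symbolCount P q (P i q) := sum_fiberwise' _ _ _
    _ = _ := by simp only [symbolCount, eq_comm]

theorem sum_sum_hammingDist_add_sum_sum_symbolCount_sq [Fintype κ] [Fintype α]
    (P : ι → κ → α) :
    ∑ i, ∑ j, hammingDist (P i) (P j) + ∑ q, ∑ e, symbolCount P q e ^ 2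
      = Fintype.card κ * Fintype.card ι ^ 2 := by
  have hagree : ∑ q, ∑ e, symbolCount P q e ^ 2 = ∑ i, ∑ j, #{q | P i q = P j q} := by
    simp only [sum_symbolCount_sq, card_filter]
    rw [sum_comm]
    exact sum_congr rfl fun i _ => sum_comm
  simp only [hagree, ← sum_add_distrib, hammingDist_add_card_filter_eq, sum_const, card_univ,
    smul_eq_mul]
  ring

variable [DecidableEq ι] [DecidableEq κ]

def updateSymbol (P : ι → κ → α) (m₀ : ι) (p : κ) (b : α) : ι → κ → α :=
  Function.update P m₀ (Function.update (P m₀) p b)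

theorem symbolCount_updateSymbol_add (P : ι → κ → α) (m₀ : ι) (p q : κ) (b e : α) :
    symbolCount (updateSymbol P m₀ p b) q e + (if P m₀ q = e then 1 else 0)
      = symbolCount P q e + (if Function.update (P m₀) p b q = e then 1 else 0) := by
  have hcol : (fun m => updateSymbol P m₀ p b m q)
      = Function.update (fun m => P m q) m₀ (Function.update (P m₀) p b q) :=
    funext (Function.apply_update (fun _ (r : κ → α) => r q) P m₀ _)
  have h := card_filter_update_add (fun m => P m q) m₀ (Function.update (P m₀) p b q) e
  rw [← hcol] at h
  exact h

variable {P : ι → κ → α} {m₀ : ι} {p : κ} {a b : α}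

theorem symbolCount_updateSymbol_of_ne {q : κ} (hq : q ≠ p) (e : α) :
    symbolCount (updateSymbol P m₀ p b) q e = symbolCount P q e := by
  simpa [Function.update_of_ne hq] using symbolCount_updateSymbol_add P m₀ p q b e

theorem symbolCount_updateSymbol_of_ne_of_ne (ha : P m₀ p = a) {e : α} (hea : e ≠ a)
    (heb : e ≠ b) : symbolCount (updateSymbol P m₀ p b) p e = symbolCount P p e := by
  simpa [ha, hea.symm, heb.symm] using symbolCount_updateSymbol_add P m₀ p p b e

theorem symbolCount_updateSymbol_old (ha : P m₀ p = a) (hab : a ≠ b) :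
    symbolCount (updateSymbol P m₀ p b) p a + 1 = symbolCount P p a := by
  simpa [ha, hab.symm] using symbolCount_updateSymbol_add P m₀ p p b a

theorem symbolCount_updateSymbol_new (ha : P m₀ p = a) (hab : a ≠ b) :
    symbolCount (updateSymbol P m₀ p b) p b = symbolCount P p b + 1 := by
  simpa [ha, hab] using symbolCount_updateSymbol_add P m₀ p p b b

theorem sum_sum_symbolCount_updateSymbol_add [Fintype κ] [Fintype α] {M : Type*}
    [AddCommMonoid M] (f : ℕ → M) (ha : P m₀ p = a) (hab : a ≠ b) :
    ∑ q, ∑ e, f (symbolCount (updateSymbol P m₀ p b) q e)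
        + (f (symbolCount P p a) + f (symbolCount P p b))
      = ∑ q, ∑ e, f (symbolCount P q e)
        + (f (symbolCount (updateSymbol P m₀ p b) p a)
          + f (symbolCount (updateSymbol P m₀ p b) p b)) := by
  have hcol := Fintype.sum_add_pair_eq_of_eqOn_compl (g := fun e => f (symbolCount P p e))
    (g' := fun e => f (symbolCount (updateSymbol P m₀ p b) p e)) hab
    fun e hea heb => by rw [symbolCount_updateSymbol_of_ne_of_ne ha hea heb]
  have hrest : ∑ q ∈ {p}ᶜ, ∑ e, f (symbolCount (updateSymbol P m₀ p b) q e)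
      = ∑ q ∈ {p}ᶜ, ∑ e, f (symbolCount P q e) :=
    sum_congr rfl fun q hq => by
      simp only [symbolCount_updateSymbol_of_ne (by simpa using hq)]
  rw [Fintype.sum_eq_add_sum_compl p, Fintype.sum_eq_add_sum_compl p, hrest, add_right_comm,
    hcol, add_right_comm]

end SymbolCount

theorem two_mul_pairDistSum_add_sum_sum_symbolCount_sq {α : Type*} [Fintype α] [DecidableEq α]
    {k L : ℕ} (P : Fin k → Fin L → α) :
    2 * pairDistSum P + ∑ q, ∑ e, symbolCount P q e ^ 2 = L * k ^ 2 := by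
  have h := sum_sum_hammingDist_add_sum_sum_symbolCount_sq P
  rw [sum_sum_eq_two_nsmul_sum_sum_lt (fun i j => hammingDist (P i) (P j))
    (fun i j => hammingDist_comm _ _) fun i => hammingDist_self _] at h
  simpa [pairDistSum] using h

theorem entS_eq_sum_sum_symbolCount {α : Type*} [Fintype α] [DecidableEq α] {k L : ℕ}
    (P : Fin k → Fin L → α) :
    entS P = ∑ q, ∑ e, Real.negMulLog (symbolCount P q e / k) :=
  rfl

theorem single_symbol_change_increases_distance_and_entropy_general {α : Type*} [Fintype α]
    [DecidableEq α] {k L : ℕ} (P : Fin k → Fin L → α) (p : Fin L) (c : α → ℕ)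
    (hc : ∀ e, c e = (Finset.univ.filter fun m => P m p = e).card)
    (eplus eminus : α)
    (hgap : c eminus + 2 ≤ c eplus) :
    ∃ m₀ : Fin k, P m₀ p = eplus ∧
      pairDistSum P
        < pairDistSum (Function.update P m₀ (Function.update (P m₀) p eminus)) ∧
      entS P < entS (Function.update P m₀ (Function.update (P m₀) p eminus)) := by
  have hcount : ∀ e, symbolCount P p e = c e := fun e => (hc e).symm
  obtain ⟨m₀, hm₀⟩ : ∃ m₀, P m₀ p = eplus := by
    obtain ⟨m₀, hm₀⟩ := card_pos.mp (show 0 < symbolCount P p eplus by rw [hcount]; omega)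
    exact ⟨m₀, (mem_filter.mp hm₀).2⟩
  have hne : eplus ≠ eminus := by rintro rfl; omega
  have hold : symbolCount (updateSymbol P m₀ p eminus) p eplus + 1 = c eplus := by
    rw [← hcount]; exact symbolCount_updateSymbol_old hm₀ hne
  have hnew : symbolCount (updateSymbol P m₀ p eminus) p eminus = c eminus + 1 := by
    rw [← hcount]; exact symbolCount_updateSymbol_new hm₀ hne
  refine ⟨m₀, hm₀, ?_, ?_⟩
  · have hsq := sum_sum_symbolCount_updateSymbol_add (· ^ 2) hm₀ hne
    have h := two_mul_pairDistSum_add_sum_sum_symbolCount_sq P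
    have h' := two_mul_pairDistSum_add_sum_sum_symbolCount_sq (updateSymbol P m₀ p eminus)
    simp only [hcount, ← hold, hnew] at hsq hgap
    change pairDistSum P < pairDistSum (updateSymbol P m₀ p eminus)
    nlinarith
  · have hsum := sum_sum_symbolCount_updateSymbol_add
      (fun n : ℕ => Real.negMulLog (n / k)) hm₀ hne
    have hstep := Real.strictConcaveOn_negMulLog.add_lt_add_of_transfer
      (x := c eminus / k) (y := c eplus / k)
      (x' := symbolCount (updateSymbol P m₀ p eminus) p eminus / k)
      (y' := symbolCount (updateSymbol P m₀ p eminus) p eplus / k)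
      (Set.mem_Ici.mpr (by positivity)) (Set.mem_Ici.mpr (by positivity))
      (by have := m₀.pos; gcongr; omega) (by gcongr; omega)
      (by rw [← hold, hnew]; push_cast; ring)
    simp only [hcount] at hsum
    change entS P < entS (updateSymbol P m₀ p eminus)
    rw [entS_eq_sum_sum_symbolCount, entS_eq_sum_sum_symbolCount]
    linarith

/-- If at position `p` the most frequent symbol `e⁺` exceeds the least frequent symbol
`e⁻` by at least 2 in count, then changing one string's symbol at `p` from `e⁺` to `e⁻`
strictly increases both the pairwise Hamming distance sum and the total Shannon entropy. -/
theorem single_symbol_change_increases_distance_and_entropy {α : Type*} [Fintype α]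
    [DecidableEq α] {k L : ℕ} (P : Fin k → Fin L → α) (p : Fin L) (c : α → ℕ)
    (hc : ∀ e, c e = (Finset.univ.filter fun m => P m p = e).card)
    (eplus eminus : α) (hmax : ∀ e, c e ≤ c eplus) (hmin : ∀ e, c eminus ≤ c e)
    (hgap : c eminus + 2 ≤ c eplus) :
    ∃ m₀ : Fin k, P m₀ p = eplus ∧
      pairDistSum P
        < pairDistSum (Function.update P m₀ (Function.update (P m₀) p eminus)) ∧
      entS P < entS (Function.update P m₀ (Function.update (P m₀) p eminus)) :=
  single_symbol_change_increases_distance_and_entropy_general P p c hc eplus eminus hgap
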